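/- arXiv:1609.07775 — 10 statements merged into one kernel-verified Lean document; each statement's English description precedes it below -/
import Mathlib

section
/- Let n ≥ 1 and let (U_a)_{a∈[n²]} and (V_b)_{b∈[n²]} be unitary error bases on ℂ^n. Define, for a, b ∈ [n²], the vector Q_{a,b} ∈ ℂ^n ⊗ ℂ^n whose coordinate at (c,d) ∈ [n]×[n] is Q_{a,b,(c,d)} = (1/√n) · ∑_{k∈[n]} U_{a,c,k} · V_{b,k,d} (i.e., Q_{a,b} is the vectorization of the matrix (1/√n)·U_a·V_b). Then Q is a quantum Latin square of dimension n². -/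
open scoped ComplexConjugate Matrix

noncomputable section

/-- A (possibly rectangularly-indexed) complex Hadamard matrix: all entries have
modulus 1, and distinct rows are orthogonal, with `∑ k, H i k * conj (H j k) = n·δ_{i,j}`
where `n` is the dimension (the common cardinality of the row and column index sets). -/
def IsHadamard {R C : Type*} [Fintype R] [Fintype C] [DecidableEq R]
    (H : Matrix R C ℂ) : Prop :=
  Fintype.card R = Fintype.card C ∧
  (∀ i j, ‖H i j‖ = 1) ∧
  (∀ i j, ∑ k, H i k * conj (H j k) = if i = j then (Fintype.card R : ℂ) else 0)

/-- A quantum Latin square of dimension `n`: an `n × n` grid (rows and columns indexed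
by `A`, with `|A| = n`) of vectors in `ℂ^n` (coordinates indexed by `X`, `|X| = n`),
such that every row and every column is an orthonormal basis. -/
def IsQLS {A X : Type*} [Fintype A] [Fintype X] [DecidableEq A]
    (Q : A → A → X → ℂ) : Prop :=
  Fintype.card X = Fintype.card A ∧
  (∀ a b c, ∑ i, conj (Q a b i) * Q a c i = if b = c then 1 else 0) ∧
  (∀ a b c, ∑ i, conj (Q a c i) * Q b c i = if a = b then 1 else 0)

/-- A unitary error basis of dimension `n`: a family of `n²` unitary matrices
(rows indexed by `R`, columns by `C`, both of cardinality `n`; elements indexed by `A`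
with `|A| = n²`) that are orthogonal with respect to the trace inner product:
`Tr(U_a† U_b) = n·δ_{a,b}`. -/
def IsUEB {A R C : Type*} [Fintype A] [Fintype R] [Fintype C]
    [DecidableEq A] [DecidableEq R] [DecidableEq C]
    (U : A → Matrix R C ℂ) : Prop :=
  Fintype.card A = (Fintype.card R) ^ 2 ∧
  (∀ a, U a * (U a)ᴴ = 1 ∧ (U a)ᴴ * U a = 1) ∧
  (∀ a b, Matrix.trace ((U a)ᴴ * U b) = if a = b then (Fintype.card R : ℂ) else 0)

/-!
`Q_{a,b}` is the row-major vectorization of `(1/√n) U_a V_b`, and vectorization turns the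
standard inner product into the trace form `⟨M, N⟩ = Tr(M† N)`. Along a row,
`Tr((U_a V_b)† U_a V_c) = Tr(V_b† V_c) = n δ_{b,c}` because `U_a` is unitary; along a column,
cyclicity of the trace and `V_c V_c† = 1` reduce `Tr((U_a V_c)† U_b V_c)` to
`Tr(U_a† U_b) = n δ_{a,b}`. Dividing by `n` gives orthonormality.
-/

namespace Matrix

variable {R l m n : Type*}

-- Mathlib's `vec` stacks columns, so the row-major flattening indexed by `m × n` is `vec Mᵀ`.
theorem sum_star_mul_eq_trace_conjTranspose_mul [CommSemiring R] [StarRing R] [Fintype m]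
    [Fintype n] (M N : Matrix m n R) :
    ∑ i : m × n, star (M i.1 i.2) * N i.1 i.2 = trace (Mᴴ * N) :=
  calc ∑ i : m × n, star (M i.1 i.2) * N i.1 i.2 = star (vec Mᵀ) ⬝ᵥ vec Nᵀ := rfl
    _ = trace ((N * Mᴴ)ᵀ) := by
      rw [star_vec_dotProduct_vec, conjTranspose_transpose_eq_transpose_conjTranspose,
        ← transpose_mul]
    _ = trace (Mᴴ * N) := by rw [trace_transpose, trace_mul_comm]

theorem conjTranspose_mul_mul_cancel_left [Semiring R] [StarRing R] [Fintype l] [DecidableEq l]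
    {U : Matrix l l R} (hU : Uᴴ * U = 1) (M N : Matrix l n R) :
    (U * M)ᴴ * (U * N) = Mᴴ * N := by
  rw [conjTranspose_mul, Matrix.mul_assoc, ← Matrix.mul_assoc Uᴴ, hU, Matrix.one_mul]

theorem trace_conjTranspose_mul_mul_cancel_right [CommSemiring R] [StarRing R] [Fintype m]
    [Fintype n] [DecidableEq n] {V : Matrix n n R} (hV : V * Vᴴ = 1) (M N : Matrix m n R) :
    trace ((M * V)ᴴ * (N * V)) = trace (Mᴴ * N) := by
  rw [conjTranspose_mul, trace_mul_cycle, Matrix.mul_assoc N, hV, Matrix.mul_one,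
    trace_mul_comm]

end Matrix

open Matrix

theorem sum_conj_inv_sqrt_mul_eq_trace {m n : Type*} [Fintype m] [Fintype n] (k : ℕ)
    (M N : Matrix m n ℂ) :
    ∑ i : m × n, conj ((√k : ℂ)⁻¹ * M i.1 i.2) * ((√k : ℂ)⁻¹ * N i.1 i.2) =
      (k : ℂ)⁻¹ * trace (Mᴴ * N) := by
  have hscale : conj ((√k : ℂ)⁻¹) * (√k : ℂ)⁻¹ = (k : ℂ)⁻¹ := by
    rw [map_inv₀, Complex.conj_ofReal, ← mul_inv, ← Complex.ofReal_mul,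
      Real.mul_self_sqrt k.cast_nonneg, Complex.ofReal_natCast]
  rw [← sum_star_mul_eq_trace_conjTranspose_mul, ← hscale, Finset.mul_sum]
  refine Finset.sum_congr rfl fun i _ => ?_
  rw [map_mul, Complex.star_def]
  ring

theorem isQLS_of_trace_orthogonal {A m : Type*} [Fintype A] [DecidableEq A] [Fintype m]
    (W : A → A → Matrix m m ℂ) (hcard : Fintype.card A = Fintype.card m ^ 2)
    (hrow : ∀ a b c, trace ((W a b)ᴴ * W a c) = if b = c then (Fintype.card m : ℂ) else 0)
    (hcol : ∀ a b c, trace ((W a c)ᴴ * W b c) = if a = b then (Fintype.card m : ℂ) else 0) :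
    IsQLS fun a b (i : m × m) => ((√(Fintype.card m) : ℂ))⁻¹ * W a b i.1 i.2 := by
  have hm (a : A) : (Fintype.card m : ℂ) ≠ 0 := by
    have hA := (Fintype.card_pos_iff.mpr ⟨a⟩).ne'
    rw [hcard] at hA
    exact_mod_cast (pow_ne_zero_iff two_ne_zero).mp hA
  refine ⟨by rw [Fintype.card_prod, hcard, sq], fun a b c => ?_, fun a b c => ?_⟩
  · rw [sum_conj_inv_sqrt_mul_eq_trace, hrow]
    split_ifs <;> simp [hm a]
  · rw [sum_conj_inv_sqrt_mul_eq_trace, hcol]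
    split_ifs <;> simp [hm a]

theorem ueb_ueb_to_qls_general (n : ℕ)
    (U V : Fin (n ^ 2) → Matrix (Fin n) (Fin n) ℂ)
    (hU : IsUEB U) (hV : IsUEB V) :
    IsQLS (fun (a b : Fin (n ^ 2)) (cd : Fin n × Fin n) =>
      ((Real.sqrt n : ℂ))⁻¹ * ∑ k : Fin n, U a cd.1 k * V b k cd.2) := by
  obtain ⟨hcard, hU_unitary, hU_orth⟩ := hU
  obtain ⟨-, hV_unitary, hV_orth⟩ := hV
  have hQLS := isQLS_of_trace_orthogonal (fun a b => U a * V b) hcard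
    (fun a b c => by rw [conjTranspose_mul_mul_cancel_left (hU_unitary a).2, hV_orth])
    (fun a b c => by rw [trace_conjTranspose_mul_mul_cancel_right (hV_unitary c).1, hU_orth])
  simpa only [Fintype.card_fin, mul_apply] using hQLS

/-- two unitary error bases on ℂ^n produce a quantum Latin square of
dimension n², via `Q_{a,b,(c,d)} = (1/√n) · ∑_k U_{a,c,k} · V_{b,k,d}`. -/
theorem ueb_ueb_to_qls (n : ℕ) (hn : 1 ≤ n)
    (U V : Fin (n ^ 2) → Matrix (Fin n) (Fin n) ℂ)
    (hU : IsUEB U) (hV : IsUEB V) :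
    IsQLS (fun (a b : Fin (n ^ 2)) (cd : Fin n × Fin n) =>
      ((Real.sqrt n : ℂ))⁻¹ * ∑ k : Fin n, U a cd.1 k * V b k cd.2) :=
  ueb_ueb_to_qls_general n U V hU hV
end
end

section
/- (Hosoya–Suzuki generalized tensor product.) Let n, m ≥ 1, let (J^b)_{b∈[m]} be an m-controlled family of Hadamard matrices of dimension n, and let (K^c)_{c∈[n]} be an n-controlled family of Hadamard matrices of dimension m. Then the matrix H indexed by [n]×[m] on both rows and columns, with entries H_{(a,b),(c,d)} = J^b_{a,c} · K^c_{b,d} for a, c ∈ [n] and b, d ∈ [m], is a Hadamard matrix of dimension nm. -/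
open scoped ComplexConjugate Matrix

noncomputable section

/-! The inner product of rows `(a, b)` and `(a', b')` of the Hosoya–Suzuki product splits as
`∑_c J^b_{a,c} conj(J^{b'}_{a',c}) · ⟨K^c_b, K^c_{b'}⟩`. Orthogonality of the rows of each `K^c`
kills every term unless `b = b'`, and then the same control index `b` on both sides lets the
orthogonality of the rows of `J^b` finish the computation. -/

namespace IsHadamard

variable {R C : Type*} [Fintype R] [Fintype C] [DecidableEq R] {H : Matrix R C ℂ}

theorem card_eq (hH : IsHadamard H) : Fintype.card R = Fintype.card C := hH.1

theorem norm_apply (hH : IsHadamard H) (i : R) (j : C) : ‖H i j‖ = 1 := hH.2.1 i j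

theorem sum_mul_conj (hH : IsHadamard H) (i j : R) :
    ∑ k, H i k * conj (H j k) = if i = j then (Fintype.card R : ℂ) else 0 :=
  hH.2.2 i j

end IsHadamard

section HosoyaSuzuki

variable {α β γ δ : Type*} [Fintype β] [Fintype γ] [Fintype δ]

def hosoyaSuzukiProduct (J : β → Matrix α γ ℂ) (K : γ → Matrix β δ ℂ) :
    Matrix (α × β) (γ × δ) ℂ :=
  Matrix.of fun p q => J p.2 p.1 q.1 * K q.1 p.2 q.2

theorem card_mul_card_eq_of_controlled [Fintype α] (hαγ : β → Fintype.card α = Fintype.card γ)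
    (hβδ : γ → Fintype.card β = Fintype.card δ) :
    Fintype.card α * Fintype.card β = Fintype.card γ * Fintype.card δ := by
  rcases isEmpty_or_nonempty β with hβ | ⟨⟨b⟩⟩
  · rcases isEmpty_or_nonempty γ with hγ | ⟨⟨c⟩⟩
    · simp
    · simp [← hβδ c]
  · rw [hαγ b]
    rcases isEmpty_or_nonempty γ with hγ | ⟨⟨c⟩⟩
    · simp
    · rw [hβδ c]

variable {J : β → Matrix α γ ℂ} {K : γ → Matrix β δ ℂ}

theorem norm_hosoyaSuzukiProduct_apply [Fintype α] [DecidableEq α] [DecidableEq β]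
    (hJ : ∀ b, IsHadamard (J b)) (hK : ∀ c, IsHadamard (K c)) (p : α × β) (q : γ × δ) :
    ‖hosoyaSuzukiProduct J K p q‖ = 1 := by
  rw [hosoyaSuzukiProduct, Matrix.of_apply, norm_mul, (hJ p.2).norm_apply, (hK q.1).norm_apply,
    one_mul]

theorem sum_hosoyaSuzukiProduct_mul_conj [DecidableEq β] (hK : ∀ c, IsHadamard (K c))
    (a a' : α) (b b' : β) :
    ∑ q, hosoyaSuzukiProduct J K (a, b) q * conj (hosoyaSuzukiProduct J K (a', b') q) =
      if b = b' then (Fintype.card β : ℂ) * ∑ c, J b a c * conj (J b a' c) else 0 := by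
  have hsplit : ∀ c, ∑ d, J b a c * K c b d * conj (J b' a' c * K c b' d) =
      J b a c * conj (J b' a' c) * if b = b' then (Fintype.card β : ℂ) else 0 := fun c => by
    rw [← (hK c).sum_mul_conj, Finset.mul_sum]
    exact Finset.sum_congr rfl fun d _ => by rw [map_mul]; ring
  simp only [hosoyaSuzukiProduct, Matrix.of_apply, Fintype.sum_prod_type, hsplit]
  split_ifs with hb
  · subst hb
    rw [← Finset.sum_mul, mul_comm]
  · simp

theorem IsHadamard.hosoyaSuzukiProduct [Fintype α] [DecidableEq α] [DecidableEq β]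
    (hJ : ∀ b, IsHadamard (J b)) (hK : ∀ c, IsHadamard (K c)) :
    IsHadamard (hosoyaSuzukiProduct J K) := by
  refine ⟨?_, norm_hosoyaSuzukiProduct_apply hJ hK, ?_⟩
  · simp only [Fintype.card_prod]
    exact card_mul_card_eq_of_controlled (fun b => (hJ b).card_eq) fun c => (hK c).card_eq
  · rintro ⟨a, b⟩ ⟨a', b'⟩
    rw [sum_hosoyaSuzukiProduct_mul_conj hK]
    simp only [Prod.mk.injEq, Fintype.card_prod]
    by_cases hb : b = b'
    · subst hb
      simp only [if_true, and_true, (hJ b).sum_mul_conj]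
      split_ifs <;> simp [mul_comm]
    · simp [hb]

end HosoyaSuzuki

theorem hosoya_suzuki_general (n m : ℕ)
    (J : Fin m → Matrix (Fin n) (Fin n) ℂ)
    (K : Fin n → Matrix (Fin m) (Fin m) ℂ)
    (hJ : ∀ b, IsHadamard (J b)) (hK : ∀ c, IsHadamard (K c)) :
    IsHadamard (Matrix.of fun (p q : Fin n × Fin m) =>
      J p.2 p.1 q.1 * K q.1 p.2 q.2) :=
  IsHadamard.hosoyaSuzukiProduct hJ hK

/-- Hosoya–Suzuki generalized tensor product: an m-controlled family of
n-dimensional Hadamard matrices and an n-controlled family of m-dimensional Hadamard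
matrices combine, via `H_{(a,b),(c,d)} = J^b_{a,c} · K^c_{b,d}`, into an
nm-dimensional Hadamard matrix. -/
theorem hosoya_suzuki (n m : ℕ) (hn : 1 ≤ n) (hm : 1 ≤ m)
    (J : Fin m → Matrix (Fin n) (Fin n) ℂ)
    (K : Fin n → Matrix (Fin m) (Fin m) ℂ)
    (hJ : ∀ b, IsHadamard (J b)) (hK : ∀ c, IsHadamard (K c)) :
    IsHadamard (Matrix.of fun (p q : Fin n × Fin m) =>
      J p.2 p.1 q.1 * K q.1 p.2 q.2) :=
  hosoya_suzuki_general n m J K hJ hK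
end
end

section
/- Let n, m ≥ 1, let (V^b)_{b∈[m²]} be an m²-controlled family of unitary error bases on ℂ^n, and let (W_b)_{b∈[m²]} be a unitary error basis on ℂ^m. For a ∈ [n²] and b ∈ [m²], define U_{(a,b)} := W_b ⊗ V^b_a, the Kronecker product acting on ℂ^m ⊗ ℂ^n, i.e., the matrix with entries (U_{(a,b)})_{(c,d),(f,e)} = W_{b,c,f} · V^b_{a,d,e} for c, f ∈ [m] and d, e ∈ [n]. Then (U_{(a,b)})_{(a,b)∈[n²]×[m²]} is a unitary error basis on ℂ^m ⊗ ℂ^n (i.e., of dimension nm). -/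
open scoped ComplexConjugate Matrix

noncomputable section

open scoped Kronecker

open Matrix

/- The Kronecker product is multiplicative for the trace inner product `⟪X, Y⟫ = Tr(X† Y)`
and sends pairs of unitaries to unitaries. Hence `W_b ⊗ V^b_a` is unitary, and
`⟪W_b ⊗ V^b_a, W_b' ⊗ V^b'_a'⟫ = ⟪W_b, W_b'⟫ ⟪V^b_a, V^b'_a'⟫`, which vanishes for `b ≠ b'` by
orthogonality of `W`; when `b = b'` both factors come from the same basis `V^b`, so the
product is `m n δ_{a,a'}`. -/

theorem Matrix.trace_conjTranspose_kronecker_mul_kronecker {R C S T : Type*}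
    [Fintype R] [Fintype C] [Fintype S] [Fintype T]
    (A B : Matrix R C ℂ) (A' B' : Matrix S T ℂ) :
    trace ((A ⊗ₖ A')ᴴ * (B ⊗ₖ B')) = trace (Aᴴ * B) * trace (A'ᴴ * B') := by
  rw [conjTranspose_kronecker, ← mul_kronecker_mul, trace_kronecker]

theorem IsUEB.controlledKronecker {A B R C S T : Type*}
    [Fintype A] [Fintype B] [Fintype R] [Fintype C] [Fintype S] [Fintype T]
    [DecidableEq A] [DecidableEq B] [DecidableEq R] [DecidableEq C] [DecidableEq S]
    [DecidableEq T] {W : B → Matrix R C ℂ} {V : B → A → Matrix S T ℂ}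
    (hW : IsUEB W) (hV : ∀ b, IsUEB (V b)) :
    IsUEB fun ab : A × B => W ab.2 ⊗ₖ V ab.2 ab.1 := by
  obtain ⟨hWcard, hWunitary, hWtrace⟩ := hW
  refine ⟨?_, fun ⟨a, b⟩ => ?_, fun ⟨a, b⟩ ⟨a', b'⟩ => ?_⟩
  · rw [Fintype.card_prod, Fintype.card_prod, hWcard]
    rcases isEmpty_or_nonempty B with _ | ⟨⟨b⟩⟩
    · have hR : Fintype.card R = 0 := pow_eq_zero_iff two_ne_zero |>.mp
        (hWcard ▸ Fintype.card_eq_zero)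
      simp [hR]
    · rw [(hV b).1]
      ring
  · obtain ⟨hVa, hVa'⟩ := (hV b).2.1 a
    obtain ⟨hWb, hWb'⟩ := hWunitary b
    simp only [conjTranspose_kronecker, ← mul_kronecker_mul, hVa, hVa', hWb, hWb',
      one_kronecker_one, and_self]
  · rw [trace_conjTranspose_kronecker_mul_kronecker, hWtrace]
    obtain rfl | hb := eq_or_ne b b'
    · rw [(hV b).2.2, Fintype.card_prod]
      simp [Prod.ext_iff]
    · simp [hb]

theorem ueb_controlled_tensor_general (n m : ℕ)
    (V : Fin (m ^ 2) → Fin (n ^ 2) → Matrix (Fin n) (Fin n) ℂ)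
    (W : Fin (m ^ 2) → Matrix (Fin m) (Fin m) ℂ)
    (hV : ∀ b, IsUEB (V b)) (hW : IsUEB W) :
    IsUEB (fun ab : Fin (n ^ 2) × Fin (m ^ 2) =>
      Matrix.of fun (cd fe : Fin m × Fin n) =>
        W ab.2 cd.1 fe.1 * V ab.2 ab.1 cd.2 fe.2) :=
  hW.controlledKronecker hV

/-- an m²-controlled family of UEBs on ℂ^n together with a UEB on ℂ^m
produce, via the Kronecker product `U_{(a,b)} = W_b ⊗ V^b_a` (acting on ℂ^m ⊗ ℂ^n,
with entries `(U_{(a,b)})_{(c,d),(f,e)} = W_{b,c,f} · V^b_{a,d,e}`), a UEB of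
dimension nm. -/
theorem ueb_controlled_tensor (n m : ℕ) (hn : 1 ≤ n) (hm : 1 ≤ m)
    (V : Fin (m ^ 2) → Fin (n ^ 2) → Matrix (Fin n) (Fin n) ℂ)
    (W : Fin (m ^ 2) → Matrix (Fin m) (Fin m) ℂ)
    (hV : ∀ b, IsUEB (V b)) (hW : IsUEB W) :
    IsUEB (fun ab : Fin (n ^ 2) × Fin (m ^ 2) =>
      Matrix.of fun (cd fe : Fin m × Fin n) =>
        W ab.2 cd.1 fe.1 * V ab.2 ab.1 cd.2 fe.2) :=
  ueb_controlled_tensor_general n m V W hV hW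
end
end

section
/- (Quantum shift-and-multiply.) Let n ≥ 1, let (H^b)_{b∈[n]} be an n-controlled family of Hadamard matrices of dimension n, and let Q be a quantum Latin square of dimension n. For a, b ∈ [n], define the n×n matrix U_{(a,b)} with entries (U_{(a,b)})_{c,d} = H^b_{a,d} · Q_{b,d,c} for c, d ∈ [n]. Then (U_{(a,b)})_{(a,b)∈[n]×[n]} is a unitary error basis on ℂ^n. -/
open scoped ComplexConjugate Matrix

noncomputable section

/-! `U_(a,b)` is the transpose of the row `Q_b` (unitary, since that row of `Q` is orthonormal)
followed by the diagonal unitary with entries `H^b_{a,d}`. In `Tr(U_(a,b)† U_(a',b'))` the sum over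
`c` is `⟨Q_{b,d}, Q_{b',d}⟩ = δ_{b,b'}` by column orthonormality of `Q`, and what remains for
`b = b'` is the inner product of rows `a` and `a'` of `H^b`, namely `n δ_{a,a'}`. -/

lemma IsHadamard.sum_conj_mul {R C : Type*} [Fintype R] [Fintype C] [DecidableEq R]
    {H : Matrix R C ℂ} (hH : IsHadamard H) (i j : R) :
    ∑ k, conj (H i k) * H j k = if i = j then (Fintype.card R : ℂ) else 0 := by
  have := congrArg conj (hH.2.2 i j)
  simp only [map_sum, map_mul, Complex.conj_conj, apply_ite conj, Complex.conj_natCast,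
    map_zero] at this
  simpa [mul_comm] using this

namespace Matrix

variable {ι : Type*} [Fintype ι] [DecidableEq ι]

lemma diagonal_mem_unitaryGroup {h : ι → ℂ} (hh : ∀ i, ‖h i‖ = 1) :
    diagonal h ∈ unitaryGroup ι ℂ := by
  rw [mem_unitaryGroup_iff', star_eq_conjTranspose, diagonal_conjTranspose, diagonal_mul_diagonal,
    ← diagonal_one]
  congr 1
  ext i
  simp [← starRingEnd_apply, Complex.conj_mul', hh i]

lemma transpose_of_mem_unitaryGroup {q : ι → ι → ℂ}
    (hq : ∀ i j, ∑ k, conj (q i k) * q j k = if i = j then 1 else 0) :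
    (of q)ᵀ ∈ unitaryGroup ι ℂ := by
  rw [mem_unitaryGroup_iff', star_eq_conjTranspose]
  ext i j
  simpa [mul_apply, one_apply, ← starRingEnd_apply] using hq i j

lemma of_mul_eq_transpose_mul_diagonal (h : ι → ℂ) (q : ι → ι → ℂ) :
    of (fun c d => h d * q d c) = (of q)ᵀ * diagonal h := by
  ext c d
  simp [mul_comm]

lemma trace_conjTranspose_of_mul_of_mul {X D : Type*} [Fintype X] [Fintype D]
    (h h' : D → ℂ) (q q' : D → X → ℂ) :
    trace ((of fun c d => h d * q d c)ᴴ * of fun c d => h' d * q' d c) =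
      ∑ d, conj (h d) * h' d * ∑ c, conj (q d c) * q' d c := by
  simp only [trace, diag_apply, mul_apply, conjTranspose_apply, of_apply, ← starRingEnd_apply,
    map_mul, Finset.mul_sum]
  refine Finset.sum_congr rfl fun d _ => Finset.sum_congr rfl fun c _ => ?_
  ring

end Matrix

theorem quantum_shift_and_multiply_general (n : ℕ)
    (H : Fin n → Matrix (Fin n) (Fin n) ℂ)
    (Q : Fin n → Fin n → Fin n → ℂ)
    (hH : ∀ b, IsHadamard (H b)) (hQ : IsQLS Q) :
    IsUEB (fun ab : Fin n × Fin n =>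
      Matrix.of fun c d : Fin n => H ab.2 ab.1 d * Q ab.2 d c) := by
  obtain ⟨-, hrow, hcol⟩ := hQ
  refine ⟨by simp [sq], fun ⟨a, b⟩ => ?_, fun ⟨a, b⟩ ⟨a', b'⟩ => ?_⟩
  · have hU : Matrix.of (fun c d => H b a d * Q b d c) ∈ Matrix.unitaryGroup (Fin n) ℂ := by
      rw [Matrix.of_mul_eq_transpose_mul_diagonal]
      exact mul_mem (Matrix.transpose_of_mem_unitaryGroup (hrow b))
        (Matrix.diagonal_mem_unitaryGroup ((hH b).2.1 a))
    exact ⟨Matrix.mem_unitaryGroup_iff.mp hU, Matrix.mem_unitaryGroup_iff'.mp hU⟩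
  · simp only [Matrix.trace_conjTranspose_of_mul_of_mul, hcol b b']
    by_cases hb : b = b'
    · subst hb
      simp [(hH b).sum_conj_mul, Prod.ext_iff]
    · simp [hb]

/-- quantum shift-and-multiply: an n-controlled family of n-dimensional
Hadamard matrices and an n-dimensional quantum Latin square produce a UEB on ℂ^n with
entries `(U_{(a,b)})_{c,d} = H^b_{a,d} · Q_{b,d,c}`. -/
theorem quantum_shift_and_multiply (n : ℕ) (hn : 1 ≤ n)
    (H : Fin n → Matrix (Fin n) (Fin n) ℂ)
    (Q : Fin n → Fin n → Fin n → ℂ)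
    (hH : ∀ b, IsHadamard (H b)) (hQ : IsQLS Q) :
    IsUEB (fun ab : Fin n × Fin n =>
      Matrix.of fun c d : Fin n => H ab.2 ab.1 d * Q ab.2 d c) :=
  quantum_shift_and_multiply_general n H Q hH hQ
end
end

section
/- Let n, m ≥ 1. Let (H^{b,c})_{b∈[m²], c∈[n]} be an (m², n)-controlled family of Hadamard matrices of dimension n, let (V^{c,f})_{c,f∈[n]} be an (n, n)-controlled family of unitary error bases on ℂ^m, and let Q be a quantum Latin square of dimension n. For a, c ∈ [n] and b ∈ [m²], define the matrix U_{(a,b,c)} indexed by [n]×[m] on rows and columns with entries (U_{(a,b,c)})_{(d,e),(f,g)} = H^{b,c}_{a,f} · V^{c,f}_{b,e,g} · Q_{c,f,d} for d, f ∈ [n] and e, g ∈ [m]. Then (U_{(a,b,c)})_{(a,b,c)∈[n]×[m²]×[n]} is a unitary error basis of dimension nm. -/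
open scoped ComplexConjugate Matrix

noncomputable section

/-! The entries of `U_xᴴ U_y` factor: at `((f, g), (f', g'))` the entry is
`conj H_{a f} · H'_{a' f'} · ⟪Q_{c f}, Q_{c' f'}⟫ · (V^{c f}_bᴴ V^{c' f'}_{b'})_{g g'}`.
Row orthonormality of the quantum Latin square, `|H_{a f}| = 1` and unitarity of the `V`'s make
each `U_x` unitary. In `Tr(U_xᴴ U_y)` column orthonormality of the quantum Latin square forces
`c = c'`, orthogonality of the error basis `V^{c f}` then forces `b = b'`, and orthogonality of
the rows of the Hadamard matrix `H^{b c}` finally forces `a = a'`. -/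

open Finset

namespace IsHadamard

variable {R C : Type*} [Fintype R] [Fintype C] [DecidableEq R] {H : Matrix R C ℂ}

theorem conj_mul_self (hH : IsHadamard H) (i : R) (j : C) : conj (H i j) * H i j = 1 := by
  rw [mul_comm, Complex.mul_conj, ← Complex.sq_norm, hH.2.1 i j]
  norm_num

theorem sum_conj_mul_s6 (hH : IsHadamard H) (i i' : R) :
    ∑ k, conj (H i k) * H i' k = if i = i' then (Fintype.card R : ℂ) else 0 := by
  simp_rw [mul_comm (conj _), hH.2.2 i' i, eq_comm]

end IsHadamard

section TernaryUEB

variable {ι κ X μ : Type*}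

def ternaryUEB (H : κ → ι → Matrix ι ι ℂ) (V : ι → ι → κ → Matrix μ μ ℂ) (Q : ι → ι → X → ℂ)
    (abc : ι × κ × ι) : Matrix (X × μ) (ι × μ) ℂ :=
  Matrix.of fun de fg =>
    H abc.2.1 abc.2.2 abc.1 fg.1 * V abc.2.2 fg.1 abc.2.1 de.2 fg.2 * Q abc.2.2 fg.1 de.1

variable [Fintype X] [Fintype μ]
  (H : κ → ι → Matrix ι ι ℂ) (V : ι → ι → κ → Matrix μ μ ℂ) (Q : ι → ι → X → ℂ)

theorem conjTranspose_ternaryUEB_mul_apply (a a' f f' : ι) (b b' : κ) (c c' : ι) (g g' : μ) :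
    ((ternaryUEB H V Q (a, b, c))ᴴ * ternaryUEB H V Q (a', b', c')) (f, g) (f', g') =
      conj (H b c a f) * H b' c' a' f' * (∑ d, conj (Q c f d) * Q c' f' d) *
        ((V c f b)ᴴ * V c' f' b') g g' := by
  simp only [ternaryUEB, Matrix.mul_apply, Matrix.conjTranspose_apply, Matrix.of_apply,
    Fintype.sum_prod_type, ← starRingEnd_apply, map_mul, mul_sum, sum_mul]
  rw [sum_comm]
  exact sum_congr rfl fun e _ => sum_congr rfl fun d _ => by ring

variable [Fintype ι]

theorem trace_conjTranspose_ternaryUEB_mul_eq_sum (a a' : ι) (b b' : κ) (c c' : ι) :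
    ((ternaryUEB H V Q (a, b, c))ᴴ * ternaryUEB H V Q (a', b', c')).trace =
      ∑ f, conj (H b c a f) * H b' c' a' f * (∑ d, conj (Q c f d) * Q c' f d) *
        ((V c f b)ᴴ * V c' f b').trace := by
  simp only [Matrix.trace, Matrix.diag, Fintype.sum_prod_type,
    conjTranspose_ternaryUEB_mul_apply, mul_sum]

variable [Fintype κ] [DecidableEq ι] [DecidableEq κ] [DecidableEq μ] {H V Q}

theorem conjTranspose_ternaryUEB_mul_self (hH : ∀ b c, IsHadamard (H b c))
    (hV : ∀ c f, IsUEB (V c f)) (hQ : IsQLS Q) (x : ι × κ × ι) :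
    (ternaryUEB H V Q x)ᴴ * ternaryUEB H V Q x = 1 := by
  obtain ⟨a, b, c⟩ := x
  ext ⟨f, g⟩ ⟨f', g'⟩
  rw [conjTranspose_ternaryUEB_mul_apply, hQ.2.1]
  by_cases hf : f = f'
  · subst hf
    rw [(hH b c).conj_mul_self, ((hV c f).2.1 b).2]
    simp [Matrix.one_apply]
  · simp [hf]

theorem trace_conjTranspose_ternaryUEB_mul (hH : ∀ b c, IsHadamard (H b c))
    (hV : ∀ c f, IsUEB (V c f)) (hQ : IsQLS Q) (x y : ι × κ × ι) :
    ((ternaryUEB H V Q x)ᴴ * ternaryUEB H V Q y).trace =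
      if x = y then (Fintype.card ι * Fintype.card μ : ℂ) else 0 := by
  obtain ⟨a, b, c⟩ := x
  obtain ⟨a', b', c'⟩ := y
  simp_rw [trace_conjTranspose_ternaryUEB_mul_eq_sum, hQ.2.2]
  by_cases hc : c = c'
  · subst hc
    simp only [↓reduceIte, mul_one, (hV _ _).2.2]
    by_cases hb : b = b'
    · subst hb
      rw [if_pos rfl, ← sum_mul, (hH b c).sum_conj_mul_s6]
      by_cases ha : a = a' <;> simp [ha]
    · simp [hb]
  · simp [hc]

theorem isUEB_ternaryUEB [DecidableEq X] (hH : ∀ b c, IsHadamard (H b c))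
    (hV : ∀ c f, IsUEB (V c f)) (hQ : IsQLS Q) : IsUEB (ternaryUEB H V Q) := by
  have hUU := conjTranspose_ternaryUEB_mul_self hH hV hQ
  refine ⟨?_, fun x => ⟨?_, hUU x⟩, ?_⟩
  · rcases isEmpty_or_nonempty ι with hι | ⟨⟨c⟩⟩
    · simp [hQ.1]
    · rw [Fintype.card_prod, Fintype.card_prod, Fintype.card_prod, hQ.1, (hV c c).1]
      ring
  · exact (Matrix.mul_eq_one_comm_of_card_eq _ _ _ (by simp [hQ.1])).mp (hUU x)
  · intro x y
    simpa [hQ.1] using trace_conjTranspose_ternaryUEB_mul hH hV hQ x y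

end TernaryUEB

theorem ternary_ueb_a_general (n m : ℕ)
    (H : Fin (m ^ 2) → Fin n → Matrix (Fin n) (Fin n) ℂ)
    (V : Fin n → Fin n → Fin (m ^ 2) → Matrix (Fin m) (Fin m) ℂ)
    (Q : Fin n → Fin n → Fin n → ℂ)
    (hH : ∀ b c, IsHadamard (H b c))
    (hV : ∀ c f, IsUEB (V c f))
    (hQ : IsQLS Q) :
    IsUEB (fun abc : Fin n × Fin (m ^ 2) × Fin n =>
      Matrix.of fun (de fg : Fin n × Fin m) =>
        H abc.2.1 abc.2.2 abc.1 fg.1 * V abc.2.2 fg.1 abc.2.1 de.2 fg.2 *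
          Q abc.2.2 fg.1 de.1) :=
  isUEB_ternaryUEB hH hV hQ

/-- an (m²,n)-controlled family of n-dimensional Hadamard matrices, an
(n,n)-controlled family of UEBs on ℂ^m, and an n-dimensional quantum Latin square
produce an nm-dimensional UEB with entries
`(U_{(a,b,c)})_{(d,e),(f,g)} = H^{b,c}_{a,f} · V^{c,f}_{b,e,g} · Q_{c,f,d}`. -/
theorem ternary_ueb_a (n m : ℕ) (hn : 1 ≤ n) (hm : 1 ≤ m)
    (H : Fin (m ^ 2) → Fin n → Matrix (Fin n) (Fin n) ℂ)
    (V : Fin n → Fin n → Fin (m ^ 2) → Matrix (Fin m) (Fin m) ℂ)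
    (Q : Fin n → Fin n → Fin n → ℂ)
    (hH : ∀ b c, IsHadamard (H b c))
    (hV : ∀ c f, IsUEB (V c f))
    (hQ : IsQLS Q) :
    IsUEB (fun abc : Fin n × Fin (m ^ 2) × Fin n =>
      Matrix.of fun (de fg : Fin n × Fin m) =>
        H abc.2.1 abc.2.2 abc.1 fg.1 * V abc.2.2 fg.1 abc.2.1 de.2 fg.2 *
          Q abc.2.2 fg.1 de.1) :=
  ternary_ueb_a_general n m H V Q hH hV hQ
end
end

section
/- Let n ≥ 1. Let (V^b)_{b∈[n²]} be an n²-controlled family of unitary error bases of dimension n², with elements indexed by a ∈ [n⁴], so entries are V^b_{a,r,e} with r, e ∈ [n²]. Let Q be a quantum Latin square of dimension n², and let W be a unitary error basis on ℂ^n. For a ∈ [n⁴] and b ∈ [n²], define the matrix U_{(a,b)} with rows and columns indexed by [n²]×[n], whose entry at row (c,d) and column (e,f) is ∑_{r∈[n²]} V^b_{a,r,e} · Q_{b,r,c} · W_{r,d,f}, for c, e ∈ [n²] and d, f ∈ [n]. Then (U_{(a,b)})_{(a,b)∈[n⁴]×[n²]} is a unitary error basis of dimension n³. -/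
open scoped ComplexConjugate Matrix

noncomputable section

/-! Write `V = V^b_a`, `V' = V^{b'}_{a'}` and `U, U'` for the corresponding matrices. Expanding
`U†U'` entrywise gives, at `((e,f),(e',f'))`, a double sum over `r, s` of
`conj (V r e) V' s e' ⟨Q_{b,r}, Q_{b',s}⟩ (W_r† W_s)_{f f'}`. For `U = U'` the rows of the quantum
Latin square kill the terms with `r ≠ s`, and unitarity of `W_r` and `V` leaves `δ_{ee'} δ_{ff'}`.
For the trace, `Tr (W_r† W_s) = n δ_{rs}` kills the terms with `r ≠ s`, and the columns of the
square give `⟨Q_{b,r}, Q_{b',r}⟩ = δ_{bb'}`, so `Tr (U†U') = n δ_{bb'} Tr (V† V')`. -/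

open Matrix Finset Kronecker

section Ternary

variable {K X E ι : Type*} [Fintype K] [Fintype X] [Fintype ι]

def ternaryMatrix (v : Matrix K E ℂ) (q : K → X → ℂ) (W : K → Matrix ι ι ℂ) :
    Matrix (X × ι) (E × ι) ℂ :=
  of fun cd ef => ∑ r, v r ef.1 * q r cd.1 * W r cd.2 ef.2

theorem conjTranspose_ternaryMatrix_mul_apply (v v' : Matrix K E ℂ) (q q' : K → X → ℂ)
    (W : K → Matrix ι ι ℂ) (e e' : E) (f f' : ι) :
    ((ternaryMatrix v q W)ᴴ * ternaryMatrix v' q' W) (e, f) (e', f') =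
      ∑ r : K, ∑ s : K, conj (v r e) * v' s e' * (∑ c : X, conj (q r c) * q' s c) *
        ((W r)ᴴ * W s) f f' := by
  rw [mul_apply]
  simp only [conjTranspose_apply, ternaryMatrix, of_apply, star_sum, sum_mul_sum]
  rw [sum_comm]
  refine sum_congr rfl fun r _ => ?_
  rw [sum_comm]
  refine sum_congr rfl fun s _ => ?_
  rw [Fintype.sum_prod_type, mul_apply]
  simp only [mul_sum, sum_mul]
  rw [sum_comm]
  refine sum_congr rfl fun d _ => sum_congr rfl fun c _ => ?_
  simp only [conjTranspose_apply, star_mul', RCLike.star_def]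
  ring

theorem conjTranspose_ternaryMatrix_mul_self [DecidableEq K] [DecidableEq ι]
    (v : Matrix K E ℂ) {q : K → X → ℂ} {W : K → Matrix ι ι ℂ}
    (hq : ∀ r s, ∑ c, conj (q r c) * q s c = if r = s then 1 else 0)
    (hW : ∀ r, (W r)ᴴ * W r = 1) :
    (ternaryMatrix v q W)ᴴ * ternaryMatrix v q W = (vᴴ * v) ⊗ₖ (1 : Matrix ι ι ℂ) := by
  ext ⟨e, f⟩ ⟨e', f'⟩
  rw [conjTranspose_ternaryMatrix_mul_apply, kronecker_apply, mul_apply, sum_mul]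
  simp only [hq, mul_ite, mul_one, mul_zero, ite_mul, zero_mul, sum_ite_eq, mem_univ, if_true, hW,
    conjTranspose_apply, RCLike.star_def]

theorem trace_conjTranspose_ternaryMatrix_mul [Fintype E] [DecidableEq K]
    (v v' : Matrix K E ℂ) {q q' : K → X → ℂ} {W : K → Matrix ι ι ℂ} {m κ : ℂ}
    (hq : ∀ r, ∑ c, conj (q r c) * q' r c = κ)
    (hW : ∀ r s, trace ((W r)ᴴ * W s) = if r = s then m else 0) :
    trace ((ternaryMatrix v q W)ᴴ * ternaryMatrix v' q' W) = m * κ * trace (vᴴ * v') := by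
  have hW' : ∀ r s, ∑ f, ((W r)ᴴ * W s) f f = if r = s then m else 0 := hW
  rw [trace, Fintype.sum_prod_type, trace, mul_sum]
  refine sum_congr rfl fun e _ => ?_
  simp only [diag_apply, conjTranspose_ternaryMatrix_mul_apply]
  rw [sum_comm]
  refine (sum_congr rfl fun r _ => sum_comm).trans ?_
  simp only [← mul_sum, hW', mul_ite, mul_zero, sum_ite_eq, mem_univ, if_true, hq]
  rw [mul_apply, mul_sum]
  refine sum_congr rfl fun r _ => ?_
  rw [conjTranspose_apply, RCLike.star_def]
  ring

end Ternary

theorem simple_ternary_ueb_general (n : ℕ)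
    (V : Fin (n ^ 2) → Fin (n ^ 4) → Matrix (Fin (n ^ 2)) (Fin (n ^ 2)) ℂ)
    (Q : Fin (n ^ 2) → Fin (n ^ 2) → Fin (n ^ 2) → ℂ)
    (W : Fin (n ^ 2) → Matrix (Fin n) (Fin n) ℂ)
    (hV : ∀ b, IsUEB (V b))
    (hQ : IsQLS Q)
    (hW : IsUEB W) :
    IsUEB (fun ab : Fin (n ^ 4) × Fin (n ^ 2) =>
      Matrix.of fun (cd ef : Fin (n ^ 2) × Fin n) =>
        ∑ r : Fin (n ^ 2), V ab.2 ab.1 r ef.1 * Q ab.2 r cd.1 * W r cd.2 ef.2) := by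
  change IsUEB fun ab : Fin (n ^ 4) × Fin (n ^ 2) => ternaryMatrix (V ab.2 ab.1) (Q ab.2) W
  have hunitary : ∀ a b,
      (ternaryMatrix (V b a) (Q b) W)ᴴ * ternaryMatrix (V b a) (Q b) W = 1 := fun a b => by
    rw [conjTranspose_ternaryMatrix_mul_self _ (hQ.2.1 b) fun r => (hW.2.1 r).2,
      ((hV b).2.1 a).2, one_kronecker_one]
  refine ⟨by simp only [Fintype.card_prod, Fintype.card_fin]; ring, fun ⟨a, b⟩ => ⟨mul_eq_one_comm.mp (hunitary a b), hunitary a b⟩, ?_⟩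
  rintro ⟨a, b⟩ ⟨a', b'⟩
  rw [trace_conjTranspose_ternaryMatrix_mul _ _ (hQ.2.2 b b') hW.2.2]
  by_cases hb : b = b'
  · subst hb
    rw [(hV b).2.2 a a']
    by_cases ha : a = a'
    · simp only [ha, ↓reduceIte, mul_one, Fintype.card_prod, Fintype.card_fin, Nat.cast_mul,
        Nat.cast_pow]
      ring
    · simp [ha]
  · simp [hb]

/-- an n²-controlled family of n²-dimensional UEBs (elements indexed by
[n⁴]), an n²-dimensional quantum Latin square, and a UEB on ℂ^n produce an
n³-dimensional UEB whose entry at row (c,d) and column (e,f) is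
`∑_{r∈[n²]} V^b_{a,r,e} · Q_{b,r,c} · W_{r,d,f}`. -/
theorem simple_ternary_ueb (n : ℕ) (hn : 1 ≤ n)
    (V : Fin (n ^ 2) → Fin (n ^ 4) → Matrix (Fin (n ^ 2)) (Fin (n ^ 2)) ℂ)
    (Q : Fin (n ^ 2) → Fin (n ^ 2) → Fin (n ^ 2) → ℂ)
    (W : Fin (n ^ 2) → Matrix (Fin n) (Fin n) ℂ)
    (hV : ∀ b, IsUEB (V b))
    (hQ : IsQLS Q)
    (hW : IsUEB W) :
    IsUEB (fun ab : Fin (n ^ 4) × Fin (n ^ 2) =>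
      Matrix.of fun (cd ef : Fin (n ^ 2) × Fin n) =>
        ∑ r : Fin (n ^ 2), V ab.2 ab.1 r ef.1 * Q ab.2 r cd.1 * W r cd.2 ef.2) :=
  simple_ternary_ueb_general n V Q W hV hQ hW
end
end

section
/- (The family 𝓕_m of constructions.) Let n ≥ 1 and m ≥ 1. Let (V^{r₀})_{r₀∈[n²]} be an n²-controlled family of unitary error bases of dimension n^{2m}, with elements indexed by a ∈ [n^{4m}], rows indexed by [n²]^m tuples (r₁,…,r_m), and columns indexed by e ∈ [n^{2m}], so entries are V^{r₀}_{a,(r₁,…,r_m),e}. Let Q be a quantum Latin square of dimension n², and let W be a unitary error basis on ℂ^n. For a ∈ [n^{4m}] and r₀ ∈ [n²], define the matrix U_{(a,r₀)} with rows indexed by [n²]^m × [n] and columns indexed by [n^{2m}] × [n], whose entry at row ((c₁,…,c_m), d) and column (e, f) is ∑_{r₁,…,r_m ∈ [n²]} V^{r₀}_{a,(r₁,…,r_m),e} · (∏_{i=1}^{m} Q_{r_{i-1}, r_i, c_i}) · W_{r_m, d, f}. Then (U_{(a,r₀)})_{(a,r₀)∈[n^{4m}]×[n²]} is a unitary error basis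 of dimension n^{2m+1}. -/
open scoped ComplexConjugate Matrix

noncomputable section

/-! Write `U_{(a,r₀)} = C_{r₀} · (V^{r₀}_a ⊗ 1)`, where `C_{r₀}` has entry
`(∏ᵢ Q_{r_{i-1},r_i,c_i}) · W_{r_m,d,f}` at row `(c, d)` and column `(r, f)`. The Gram matrix
`C_{r₀}† C_{r₀'}` factors along the two paths `r₀ r` and `r₀' r'` into the QLS overlaps
`⟨Q_{r_{i-1},r_i}, Q_{r'_{i-1},r'_i}⟩` times `W_{r_m}† W_{r'_m}`. For `r₀ = r₀'`, row orthonormality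
of `Q`, propagated forward from the common start, makes the overlaps vanish unless `r = r'`, so
`C_{r₀}` is an isometry and `U` is unitary. Tracing out `f` turns the `W`-factor into
`n · δ_{r_m,r'_m}`; column orthonormality of `Q`, propagated backward from the common end, then
forces the whole paths to agree, leaving `n · δ_{r₀,r₀'} · Tr(V^{r₀ †}_a V^{r₀}_b)`. -/

open scoped Kronecker

section PathProd

variable {K R : Type*} [CommMonoidWithZero R]

def pathProd {m : ℕ} (T : K → K → K → K → R) (s s' : Fin (m + 1) → K) : R :=
  ∏ i : Fin m, T (s i.castSucc) (s' i.castSucc) (s i.succ) (s' i.succ)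

theorem pathProd_comp_rev {m : ℕ} (T : K → K → K → K → R) (s s' : Fin (m + 1) → K) :
    pathProd (fun a a' b b' => T b b' a a') (s ∘ Fin.rev) (s' ∘ Fin.rev) = pathProd T s s' :=
  Fintype.prod_equiv Fin.revPerm _ _ fun i => by simp [Fin.rev_castSucc, Fin.rev_succ]

variable [DecidableEq K]

theorem pathProd_eq_ite_of_head_eq (T : K → K → K → K → R)
    (hT : ∀ a b b', T a a b b' = if b = b' then 1 else 0) :
    ∀ {m : ℕ} (s s' : Fin (m + 1) → K), s 0 = s' 0 → pathProd T s s' = if s = s' then 1 else 0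
  | 0, s, s', h => by
    rw [if_pos (funext fun i => Fin.fin_one_eq_zero i ▸ h)]
    simp [pathProd]
  | m + 1, s, s', h => by
    have htail := pathProd_eq_ite_of_head_eq T hT (Fin.tail s) (Fin.tail s')
    have hcons : s = s' ↔ Fin.tail s = Fin.tail s' :=
      ⟨congrArg _, fun ht => funext (Fin.cases h (congrFun ht))⟩
    rw [pathProd, Fin.prod_univ_succ]
    change T (s 0) (s' 0) (s 1) (s' 1) * pathProd T (Fin.tail s) (Fin.tail s') = _
    rw [h, hT]
    by_cases h1 : s 1 = s' 1
    · rw [if_pos h1, one_mul, htail h1]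
      exact if_congr hcons.symm rfl rfl
    · rw [if_neg h1, zero_mul, if_neg fun hs => h1 (congrFun hs 1)]

theorem pathProd_eq_ite_of_last_eq (T : K → K → K → K → R)
    (hT : ∀ a a' b, T a a' b b = if a = a' then 1 else 0) {m : ℕ} (s s' : Fin (m + 1) → K)
    (h : s (Fin.last m) = s' (Fin.last m)) : pathProd T s s' = if s = s' then 1 else 0 := by
  rw [← pathProd_comp_rev, pathProd_eq_ite_of_head_eq _ (fun b a a' => hT a a' b) _ _ (by simpa)]
  exact if_congr Fin.rev_surjective.injective_comp_right.eq_iff rfl rfl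

end PathProd

theorem Matrix.trace_mul_kronecker_one {R D : Type*} [Fintype R] [Fintype D] [DecidableEq D]
    (M : Matrix (R × D) (R × D) ℂ) (N : Matrix R R ℂ) :
    trace (M * (N ⊗ₖ 1)) = ∑ r, ∑ r', N r' r * ∑ f, M (r, f) (r', f) := by
  simp only [trace, diag_apply, mul_apply, kroneckerMap_apply, one_apply, Fintype.sum_prod_type,
    mul_ite, mul_one, mul_zero, Finset.sum_ite_eq', Finset.mem_univ, if_true, Finset.mul_sum]
  refine Finset.sum_congr rfl fun r _ => Finset.sum_comm.trans ?_
  simp only [mul_comm]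

section QLSPath

variable {K X : Type*} [Fintype X] {m : ℕ}

def pathAmp (Q : K → K → X → ℂ) (s : Fin (m + 1) → K) (c : Fin m → X) : ℂ :=
  ∏ i, Q (s i.castSucc) (s i.succ) (c i)

def qlsOverlap (Q : K → K → X → ℂ) (a a' b b' : K) : ℂ :=
  ∑ x, conj (Q a b x) * Q a' b' x

theorem sum_conj_pathAmp_mul_pathAmp (Q : K → K → X → ℂ) (s s' : Fin (m + 1) → K) :
    ∑ c, conj (pathAmp Q s c) * pathAmp Q s' c = pathProd (qlsOverlap Q) s s' := by
  simp only [pathAmp, pathProd, qlsOverlap, map_prod, ← Finset.prod_mul_distrib]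
  rw [Finset.prod_univ_sum, Fintype.piFinset_univ]

end QLSPath

section ChainMatrix

variable {K X D : Type*} {m : ℕ}

def chainMatrix (m : ℕ) (Q : K → K → X → ℂ) (W : K → Matrix D D ℂ) (r₀ : K) :
    Matrix ((Fin m → X) × D) ((Fin m → K) × D) ℂ :=
  Matrix.of fun cd rf =>
    pathAmp Q (Fin.cons r₀ rf.1 : Fin (m + 1) → K) cd.1 *
      W ((Fin.cons r₀ rf.1 : Fin (m + 1) → K) (Fin.last m)) cd.2 rf.2

theorem chainMatrix_mul_kronecker_one_apply [Fintype K] [Fintype D] [DecidableEq D] {E : Type*}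
    (Q : K → K → X → ℂ) (W : K → Matrix D D ℂ) (r₀ : K) (A : Matrix (Fin m → K) E ℂ)
    (cd : (Fin m → X) × D) (ef : E × D) :
    (chainMatrix m Q W r₀ * (A ⊗ₖ (1 : Matrix D D ℂ))) cd ef =
      ∑ r, A r ef.1 * pathAmp Q (Fin.cons r₀ r : Fin (m + 1) → K) cd.1 *
        W ((Fin.cons r₀ r : Fin (m + 1) → K) (Fin.last m)) cd.2 ef.2 := by
  simp only [Matrix.mul_apply, chainMatrix, Matrix.of_apply, Matrix.kroneckerMap_apply,
    Matrix.one_apply, Fintype.sum_prod_type, mul_ite, mul_one, mul_zero, Finset.sum_ite_eq',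
    Finset.mem_univ, if_true]
  exact Finset.sum_congr rfl fun r _ => by ring

variable [Fintype X] [Fintype D]

theorem conjTranspose_chainMatrix_mul_chainMatrix_apply (Q : K → K → X → ℂ)
    (W : K → Matrix D D ℂ) (r₀ r₀' : K) (rf rf' : (Fin m → K) × D) :
    ((chainMatrix m Q W r₀)ᴴ * chainMatrix m Q W r₀') rf rf' =
      pathProd (qlsOverlap Q) (Fin.cons r₀ rf.1 : Fin (m + 1) → K) (Fin.cons r₀' rf'.1) *
        ((W ((Fin.cons r₀ rf.1 : Fin (m + 1) → K) (Fin.last m)))ᴴ *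
          W ((Fin.cons r₀' rf'.1 : Fin (m + 1) → K) (Fin.last m)) : Matrix D D ℂ) rf.2 rf'.2 := by
  simp only [Matrix.mul_apply, Matrix.conjTranspose_apply, chainMatrix, Matrix.of_apply,
    Fintype.sum_prod_type, ← sum_conj_pathAmp_mul_pathAmp, Finset.sum_mul_sum]
  refine Finset.sum_congr rfl fun c _ => Finset.sum_congr rfl fun d _ => ?_
  rw [star_mul', Complex.star_def]
  ring

variable [DecidableEq K] {Q : K → K → X → ℂ} {W : K → Matrix D D ℂ}

theorem sum_conjTranspose_chainMatrix_mul_chainMatrix_apply_diag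
    (hcol : ∀ a a' b, qlsOverlap Q a a' b b = if a = a' then 1 else 0)
    (hW : ∀ k k', Matrix.trace ((W k)ᴴ * W k') = if k = k' then (Fintype.card D : ℂ) else 0)
    (r₀ r₀' : K) (r r' : Fin m → K) :
    ∑ f, ((chainMatrix m Q W r₀)ᴴ * chainMatrix m Q W r₀') (r, f) (r', f) =
      if r₀ = r₀' ∧ r = r' then (Fintype.card D : ℂ) else 0 := by
  simp only [conjTranspose_chainMatrix_mul_chainMatrix_apply, ← Finset.mul_sum]
  change _ * Matrix.trace _ = _
  rw [hW]
  by_cases hl : (Fin.cons r₀ r : Fin (m + 1) → K) (Fin.last m) =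
      (Fin.cons r₀' r' : Fin (m + 1) → K) (Fin.last m)
  · rw [if_pos hl, pathProd_eq_ite_of_last_eq _ hcol _ _ hl]
    simp [Fin.cons_inj]
  · rw [if_neg hl, mul_zero, if_neg]
    rintro ⟨rfl, rfl⟩
    exact hl rfl

variable [DecidableEq D]

theorem conjTranspose_chainMatrix_mul_self
    (hrow : ∀ a b b', qlsOverlap Q a a b b' = if b = b' then 1 else 0)
    (hW : ∀ k, (W k)ᴴ * W k = 1) (r₀ : K) :
    (chainMatrix m Q W r₀)ᴴ * chainMatrix m Q W r₀ = 1 := by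
  ext ⟨r, f⟩ ⟨r', f'⟩
  rw [conjTranspose_chainMatrix_mul_chainMatrix_apply,
    pathProd_eq_ite_of_head_eq _ hrow (Fin.cons r₀ r) (Fin.cons r₀ r') rfl]
  by_cases h : r = r'
  · subst h
    simp [hW, Matrix.one_apply]
  · simp [h]

theorem trace_chainMatrix_mul_kronecker [Fintype K] {E : Type*} [Fintype E]
    (hcol : ∀ a a' b, qlsOverlap Q a a' b b = if a = a' then 1 else 0)
    (hW : ∀ k k', Matrix.trace ((W k)ᴴ * W k') = if k = k' then (Fintype.card D : ℂ) else 0)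
    (r₀ r₀' : K) (A B : Matrix (Fin m → K) E ℂ) :
    Matrix.trace ((chainMatrix m Q W r₀ * (A ⊗ₖ (1 : Matrix D D ℂ)))ᴴ *
        (chainMatrix m Q W r₀' * (B ⊗ₖ (1 : Matrix D D ℂ)))) =
      if r₀ = r₀' then Fintype.card D * Matrix.trace (Aᴴ * B) else 0 := by
  have hcycle : (chainMatrix m Q W r₀ * (A ⊗ₖ (1 : Matrix D D ℂ)))ᴴ *
      (chainMatrix m Q W r₀' * (B ⊗ₖ (1 : Matrix D D ℂ))) =
      (Aᴴ ⊗ₖ (1 : Matrix D D ℂ)) *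
        ((chainMatrix m Q W r₀)ᴴ * chainMatrix m Q W r₀' * (B ⊗ₖ (1 : Matrix D D ℂ))) := by
    rw [Matrix.conjTranspose_mul, Matrix.conjTranspose_kronecker, Matrix.conjTranspose_one]
    simp only [Matrix.mul_assoc]
  rw [hcycle, Matrix.trace_mul_comm, Matrix.mul_assoc, ← Matrix.mul_kronecker_mul, Matrix.one_mul,
    Matrix.trace_mul_kronecker_one]
  simp only [sum_conjTranspose_chainMatrix_mul_chainMatrix_apply_diag hcol hW]
  split_ifs with h
  · simp only [h, true_and, mul_ite, mul_zero, Finset.sum_ite_eq, Finset.mem_univ, if_true,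
      ← Finset.sum_mul]
    rw [mul_comm, ← Matrix.trace_mul_comm]
    rfl
  · simp [h]

theorem isUEB_chainMatrix_mul_kronecker [Fintype K] [DecidableEq X] {A E : Type*} [Fintype A]
    [DecidableEq A] [Fintype E] [DecidableEq E] {V : K → A → Matrix (Fin m → K) E ℂ}
    (hV : ∀ r₀, IsUEB (V r₀)) (hQ : IsQLS Q) (hW : IsUEB W)
    (hE : Fintype.card E = Fintype.card K ^ m) :
    IsUEB fun ar : A × K => chainMatrix m Q W ar.2 * (V ar.2 ar.1 ⊗ₖ (1 : Matrix D D ℂ)) := by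
  obtain ⟨hQcard, hrow, hcol⟩ := hQ
  have hcard : Fintype.card (E × D) = Fintype.card ((Fin m → X) × D) := by
    simp [hE, hQcard]
  refine ⟨?_, fun ar => ?_, fun ar br => ?_⟩
  · simp only [Fintype.card_prod, Fintype.card_fun, Fintype.card_fin, hQcard, hW.1]
    rcases isEmpty_or_nonempty K with hK | ⟨⟨r₀⟩⟩
    · have hD : Fintype.card D = 0 :=
        (pow_eq_zero_iff two_ne_zero).mp (by rw [← hW.1, Fintype.card_eq_zero])
      simp [hD]
    · rw [(hV r₀).1, Fintype.card_fun, Fintype.card_fin, hW.1]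
      ring
  · have hleft : (chainMatrix m Q W ar.2 * (V ar.2 ar.1 ⊗ₖ (1 : Matrix D D ℂ)))ᴴ *
        (chainMatrix m Q W ar.2 * (V ar.2 ar.1 ⊗ₖ (1 : Matrix D D ℂ))) = 1 := by
      rw [Matrix.conjTranspose_mul, Matrix.mul_assoc, ← Matrix.mul_assoc (chainMatrix m Q W ar.2)ᴴ,
        conjTranspose_chainMatrix_mul_self hrow (fun k => (hW.2.1 k).2), Matrix.one_mul,
        Matrix.conjTranspose_kronecker, Matrix.conjTranspose_one, ← Matrix.mul_kronecker_mul,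
        ((hV _).2.1 _).2, Matrix.one_mul, Matrix.one_kronecker_one]
    exact ⟨(Matrix.mul_eq_one_comm_of_card_eq _ _ ℂ hcard).mp hleft, hleft⟩
  · obtain ⟨a, r₀⟩ := ar
    obtain ⟨b, r₀'⟩ := br
    rw [trace_chainMatrix_mul_kronecker hcol hW.2.2]
    by_cases h : r₀ = r₀'
    · subst h
      rw [if_pos rfl, (hV r₀).2.2 a b]
      by_cases hab : a = b
      · subst hab
        simp [hQcard, mul_comm]
      · simp [hab]
    · simp [h]

end ChainMatrix

theorem family_Fm_ueb_general (n m : ℕ)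
    (V : Fin (n ^ 2) → Fin (n ^ (4 * m)) →
      Matrix (Fin m → Fin (n ^ 2)) (Fin (n ^ (2 * m))) ℂ)
    (Q : Fin (n ^ 2) → Fin (n ^ 2) → Fin (n ^ 2) → ℂ)
    (W : Fin (n ^ 2) → Matrix (Fin n) (Fin n) ℂ)
    (hV : ∀ r₀, IsUEB (V r₀))
    (hQ : IsQLS Q)
    (hW : IsUEB W) :
    IsUEB (fun ar : Fin (n ^ (4 * m)) × Fin (n ^ 2) =>
      Matrix.of fun (cd : (Fin m → Fin (n ^ 2)) × Fin n)
          (ef : Fin (n ^ (2 * m)) × Fin n) =>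
        ∑ r : Fin m → Fin (n ^ 2),
          (fun s : Fin (m + 1) → Fin (n ^ 2) =>
            V ar.2 ar.1 r ef.1 *
              (∏ i : Fin m, Q (s i.castSucc) (s i.succ) (cd.1 i)) *
              W (s (Fin.last m)) cd.2 ef.2)
          (Fin.cons ar.2 r)) := by
  have hE : Fintype.card (Fin (n ^ (2 * m))) = Fintype.card (Fin (n ^ 2)) ^ m := by
    simp [pow_mul]
  convert isUEB_chainMatrix_mul_kronecker hV hQ hW hE using 1
  ext ar cd ef
  rw [chainMatrix_mul_kronecker_one_apply]
  rfl

/-- the family 𝓕_m: an n²-controlled family of n^{2m}-dimensional UEBs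
(elements indexed by [n^{4m}], rows by m-tuples over [n²], columns by [n^{2m}]), an
n²-dimensional quantum Latin square, and a UEB on ℂ^n produce an n^{2m+1}-dimensional
UEB whose entry at row ((c₁,…,c_m),d) and column (e,f) is
`∑_{r₁,…,r_m} V^{r₀}_{a,(r₁,…,r_m),e} · (∏ᵢ Q_{r_{i-1},r_i,c_i}) · W_{r_m,d,f}`,
where r₀ is the controlling index (formalized via `Fin.cons r₀ r`). -/
theorem family_Fm_ueb (n m : ℕ) (hn : 1 ≤ n) (hm : 1 ≤ m)
    (V : Fin (n ^ 2) → Fin (n ^ (4 * m)) →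
      Matrix (Fin m → Fin (n ^ 2)) (Fin (n ^ (2 * m))) ℂ)
    (Q : Fin (n ^ 2) → Fin (n ^ 2) → Fin (n ^ 2) → ℂ)
    (W : Fin (n ^ 2) → Matrix (Fin n) (Fin n) ℂ)
    (hV : ∀ r₀, IsUEB (V r₀))
    (hQ : IsQLS Q)
    (hW : IsUEB W) :
    IsUEB (fun ar : Fin (n ^ (4 * m)) × Fin (n ^ 2) =>
      Matrix.of fun (cd : (Fin m → Fin (n ^ 2)) × Fin n)
          (ef : Fin (n ^ (2 * m)) × Fin n) =>
        ∑ r : Fin m → Fin (n ^ 2),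
          (fun s : Fin (m + 1) → Fin (n ^ 2) =>
            V ar.2 ar.1 r ef.1 *
              (∏ i : Fin m, Q (s i.castSucc) (s i.succ) (cd.1 i)) *
              W (s (Fin.last m)) cd.2 ef.2)
          (Fin.cons ar.2 r)) :=
  family_Fm_ueb_general n m V Q W hV hQ hW
end
end

section
/- Let m ≥ 1 and let (V_i)_{i∈I} be a unitary error basis on ℂ^m with I of cardinality m², such that the identity matrix belongs to (V_i) and (V_i) is equivalent to a quantum shift-and-multiply basis. Then there exists a subset S ⊆ I of cardinality m such that V_i · V_j = V_j · V_i for all i, j ∈ S (the UEB contains m pairwise commuting matrices). -/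
/-!
Write `V i = c i • A Q_a D_{a,b} B` with `(a, b) = σ i`, and let `V i₀ = 1` with
`σ i₀ = (a₀, b₀)`. Then `A Q_{a₀} (c i₀ • D_{a₀,b₀}) B = 1`, so `B A Q_{a₀}` is the inverse of a
diagonal matrix and commutes with every diagonal matrix. The `m` elements of row `a₀` are scalar multiples of
`A Q_{a₀} D_{a₀,b} B`, and the product of two of them is `A Q_{a₀} D_{a₀,b} (B A Q_{a₀}) D_{a₀,b'} B`,
whose three middle factors commute pairwise.
-/

open scoped ComplexConjugate Matrix

noncomputable section

theorem Matrix.IsDiag.commute {n α : Type*} [Fintype n] [NonUnitalNonAssocCommSemiring α]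
    {A B : Matrix n n α} (hA : A.IsDiag) (hB : B.IsDiag) : Commute A B := by
  classical
  rw [← (Matrix.isDiag_iff_diagonal_diag A).mp hA, ← (Matrix.isDiag_iff_diagonal_diag B).mp hB]
  exact Matrix.commute_diagonal _ _

theorem commute_mul_mul_of_mul_mul_eq_one {M : Type*} [Monoid M] [IsDedekindFiniteMonoid M]
    {a p b e f : M} (h : a * p * b = 1) (hpe : Commute p e) (hpf : Commute p f)
    (hef : Commute e f) : Commute (a * e * b) (a * f * b) := by
  -- Dedekind finiteness makes `b * a` a two-sided inverse of `p`.
  have hright : p * (b * a) = 1 := by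
    rw [← mul_assoc, mul_eq_one_comm, ← mul_assoc, h]
  let u : Mˣ := ⟨p, b * a, hright, mul_eq_one_comm.mp hright⟩
  have hue : Commute (b * a) e := Commute.units_inv_left (u := u) hpe
  have huf : Commute (b * a) f := Commute.units_inv_left (u := u) hpf
  have key : e * (b * a) * f = f * (b * a) * e :=
    calc e * (b * a) * f = b * a * e * f := by rw [hue.eq]
      _ = b * a * f * e := by rw [mul_assoc, hef.eq, ← mul_assoc]
      _ = f * (b * a) * e := by rw [huf.eq]
  calc a * e * b * (a * f * b) = a * (e * (b * a) * f) * b := by simp only [mul_assoc]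
    _ = a * (f * (b * a) * e) * b := by rw [key]
    _ = a * f * b * (a * e * b) := by simp only [mul_assoc]

theorem qsm_has_commuting_subset_general (m : ℕ)
    {I : Type}
    (V : I → Matrix (Fin m) (Fin m) ℂ)
    (hid : ∃ i, V i = 1)
    (hequiv : ∃ (Qm : Fin m → Matrix (Fin m) (Fin m) ℂ)
        (D : Fin m → Fin m → Matrix (Fin m) (Fin m) ℂ),
        (∀ a, Qm a ∈ Matrix.unitaryGroup (Fin m) ℂ) ∧
        (∀ a b, D a b ∈ Matrix.unitaryGroup (Fin m) ℂ) ∧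
        (∀ a b, (D a b).IsDiag) ∧
        IsUEB (fun ab : Fin m × Fin m => Qm ab.1 * D ab.1 ab.2) ∧
        ∃ (A B : Matrix (Fin m) (Fin m) ℂ),
          A ∈ Matrix.unitaryGroup (Fin m) ℂ ∧ B ∈ Matrix.unitaryGroup (Fin m) ℂ ∧
          ∃ (c : I → ℂ), (∀ i, ‖c i‖ = 1) ∧
          ∃ (σ : I ≃ Fin m × Fin m),
            ∀ i, V i = c i • (A * (Qm (σ i).1 * D (σ i).1 (σ i).2) * B)) :
    ∃ S : Finset I, S.card = m ∧ ∀ i ∈ S, ∀ j ∈ S, V i * V j = V j * V i := by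
  obtain ⟨Qm, D, -, -, hdiag, -, A, B, -, -, c, -, σ, hV⟩ := hequiv
  obtain ⟨i₀, hi₀⟩ := hid
  obtain ⟨⟨a₀, b₀⟩, hσi₀⟩ : ∃ ab, σ i₀ = ab := ⟨_, rfl⟩
  let row : Fin m ↪ I := (Function.Embedding.sectR a₀ (Fin m)).trans σ.symm.toEmbedding
  have hrow : ∀ b, V (row b) = c (row b) • (A * Qm a₀ * D a₀ b * B) := fun b => by
    simp [row, hV, Matrix.mul_assoc]
  have hunit : A * Qm a₀ * (c i₀ • D a₀ b₀) * B = 1 := by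
    rw [← hi₀, hV, hσi₀, Matrix.mul_smul, Matrix.smul_mul]
    simp only [Matrix.mul_assoc]
  refine ⟨Finset.univ.map row, by simp, ?_⟩
  simp only [Finset.mem_map, Finset.mem_univ, true_and]
  rintro _ ⟨b, rfl⟩ _ ⟨b', rfl⟩
  rw [hrow, hrow]
  refine ((Commute.smul_left ?_ _).smul_right _).eq
  exact commute_mul_mul_of_mul_mul_eq_one hunit (((hdiag a₀ b₀).smul _).commute (hdiag a₀ b))
    (((hdiag a₀ b₀).smul _).commute (hdiag a₀ b')) ((hdiag a₀ b).commute (hdiag a₀ b'))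

/-- a UEB on ℂ^m containing the identity matrix and equivalent to a
quantum shift-and-multiply basis contains m pairwise commuting matrices. -/
theorem qsm_has_commuting_subset (m : ℕ) (hm : 1 ≤ m)
    {I : Type} [Fintype I] [DecidableEq I]
    (V : I → Matrix (Fin m) (Fin m) ℂ)
    (hV : IsUEB V)
    (hid : ∃ i, V i = 1)
    (hequiv : ∃ (Qm : Fin m → Matrix (Fin m) (Fin m) ℂ)
        (D : Fin m → Fin m → Matrix (Fin m) (Fin m) ℂ),
        (∀ a, Qm a ∈ Matrix.unitaryGroup (Fin m) ℂ) ∧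
        (∀ a b, D a b ∈ Matrix.unitaryGroup (Fin m) ℂ) ∧
        (∀ a b, (D a b).IsDiag) ∧
        IsUEB (fun ab : Fin m × Fin m => Qm ab.1 * D ab.1 ab.2) ∧
        ∃ (A B : Matrix (Fin m) (Fin m) ℂ),
          A ∈ Matrix.unitaryGroup (Fin m) ℂ ∧ B ∈ Matrix.unitaryGroup (Fin m) ℂ ∧
          ∃ (c : I → ℂ), (∀ i, ‖c i‖ = 1) ∧
          ∃ (σ : I ≃ Fin m × Fin m),
            ∀ i, V i = c i • (A * (Qm (σ i).1 * D (σ i).1 (σ i).2) * B)) :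
    ∃ S : Finset I, S.card = m ∧ ∀ i ∈ S, ∀ j ∈ S, V i * V j = V j * V i :=
  qsm_has_commuting_subset_general m V hid hequiv
end
end

section
/- Let (V_i)_{i∈I} be a unitary error basis on ℂ^n containing the identity matrix, such that (V_i) is equivalent to a nice error basis. Then, up to multiplication by a phase, (V_i) is closed under taking adjoints: for every i ∈ I there exist j ∈ I and a complex scalar c with |c| = 1 such that V_i† = c · V_j. -/
/-!
Left multiplication by a member `U a` of a nice error basis permutes the basis up to phases
(orthogonality makes it injective), so `U a * U b` is a phase times the identity for some `b`,
and then `(U a)ᴴ` is a phase times `U b`.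

For `V i = c i • (P * U (σ i) * R)` with `V i₀ = 1`, the normalisation forces `R * P` to be a
phase times `(U (σ i₀))ᴴ`. Hence `V i * V j` is a phase times
`P * (U (σ i) * (U (σ i₀))ᴴ * U (σ j)) * R`, whose middle factor is a phase times some
`U a`. So `V` is itself closed under products up to phases, and the first argument applies to `V`.
-/

open scoped ComplexConjugate Matrix

noncomputable section

open Matrix

variable {m ι κ : Type*}

def MemUpToPhase (U : ι → Matrix m m ℂ) (M : Matrix m m ℂ) : Prop :=
  ∃ (j : ι) (c : ℂ), ‖c‖ = 1 ∧ M = c • U j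

theorem MemUpToPhase.self (U : ι → Matrix m m ℂ) (a : ι) : MemUpToPhase U (U a) :=
  ⟨a, 1, norm_one, (one_smul ℂ _).symm⟩

theorem MemUpToPhase.smul {U : ι → Matrix m m ℂ} {M : Matrix m m ℂ} (h : MemUpToPhase U M)
    {z : ℂ} (hz : ‖z‖ = 1) : MemUpToPhase U (z • M) := by
  obtain ⟨j, c, hc, rfl⟩ := h
  exact ⟨j, z * c, by rw [norm_mul, hz, hc, one_mul], smul_smul z c (U j)⟩

variable [Fintype m]

def MulClosedUpToPhase (U : ι → Matrix m m ℂ) : Prop :=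
  ∀ a b, MemUpToPhase U (U a * U b)

theorem MemUpToPhase.mul {U : ι → Matrix m m ℂ} {M N : Matrix m m ℂ}
    (hU : MulClosedUpToPhase U) (hM : MemUpToPhase U M) (hN : MemUpToPhase U N) :
    MemUpToPhase U (M * N) := by
  obtain ⟨a, z, hz, rfl⟩ := hM
  obtain ⟨b, w, hw, rfl⟩ := hN
  rw [smul_mul_smul_comm]
  exact (hU a b).smul (by rw [norm_mul, hz, hw, one_mul])

theorem MemUpToPhase.mul_mul_of_equivalent {U : ι → Matrix m m ℂ} {V : κ → Matrix m m ℂ}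
    {M P R : Matrix m m ℂ} {c : κ → ℂ} (hc : ∀ k, ‖c k‖ = 1) {σ : κ ≃ ι}
    (hV : ∀ k, V k = c k • (P * U (σ k) * R)) (hM : MemUpToPhase U M) :
    MemUpToPhase V (P * M * R) := by
  obtain ⟨a, z, hz, rfl⟩ := hM
  set k := σ.symm a
  have hck : c k ≠ 0 := norm_ne_zero_iff.mp (by rw [hc]; exact one_ne_zero)
  refine ⟨k, z * (c k)⁻¹, by rw [norm_mul, norm_inv, hz, hc, inv_one, one_mul], ?_⟩
  rw [hV, Equiv.apply_symm_apply, smul_smul, mul_assoc z, inv_mul_cancel₀ hck, mul_one,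
    Matrix.mul_smul, Matrix.smul_mul]

theorem IsUEB.eq_of_eq_smul {A R C : Type*} [Fintype A] [Fintype R] [Fintype C]
    [DecidableEq A] [DecidableEq R] [DecidableEq C] {U : A → Matrix R C ℂ} (hU : IsUEB U)
    {a b : A} {z : ℂ} (h : U a = z • U b) : a = b := by
  by_contra hab
  obtain ⟨hcard, -, htrace⟩ := hU
  have hR : (Fintype.card R : ℂ) ≠ 0 := by
    have : Nonempty A := ⟨a⟩
    have : Fintype.card A ≠ 0 := Fintype.card_ne_zero
    exact_mod_cast fun h0 => this (by rw [hcard, h0]; rfl)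
  have hz : z = 0 := by
    have := htrace b a
    rw [if_neg (Ne.symm hab), h, Matrix.mul_smul, Matrix.trace_smul, htrace b b, if_pos rfl,
      smul_eq_mul] at this
    exact (mul_eq_zero.mp this).resolve_right hR
  have := htrace a a
  rw [if_pos rfl, h, hz, zero_smul, Matrix.mul_zero, Matrix.trace_zero] at this
  exact hR this.symm

variable [DecidableEq m] {A : Type*} [Fintype A] [DecidableEq A] {U : A → Matrix m m ℂ}

theorem IsUEB.memUpToPhase_conjTranspose (hU : IsUEB U) (hmul : MulClosedUpToPhase U)
    (hone : ∃ e, U e = 1) (a : A) : MemUpToPhase U (U a)ᴴ := by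
  choose f ω hω hf using hmul a
  have hω₀ : ∀ b, ω b ≠ 0 := fun b => norm_ne_zero_iff.mp (by rw [hω]; exact one_ne_zero)
  have hU_eq : ∀ b, U b = ω b • ((U a)ᴴ * U (f b)) := fun b => by
    rw [← Matrix.mul_smul, ← hf, ← Matrix.mul_assoc, (hU.2.1 a).2, Matrix.one_mul]
  have hf_inj : Function.Injective f := fun b b' hbb' => by
    refine hU.eq_of_eq_smul (z := ω b * (ω b')⁻¹) ?_
    rw [hU_eq b, hU_eq b', hbb', smul_smul, mul_assoc, inv_mul_cancel₀ (hω₀ b'), mul_one]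
  obtain ⟨e, he⟩ := hone
  obtain ⟨b, hb⟩ := (Finite.injective_iff_surjective.mp hf_inj) e
  refine ⟨b, (ω b)⁻¹, by rw [norm_inv, hω, inv_one], ?_⟩
  rw [hU_eq b, hb, he, Matrix.mul_one, smul_smul, inv_mul_cancel₀ (hω₀ b), one_smul]

theorem mul_eq_smul_conjTranspose_of_mul_mul_eq {P M R : Matrix m m ℂ} {z : ℂ}
    (hP : Pᴴ * P = 1) (hM : Mᴴ * M = 1) (h : P * M * R = z • 1) : R * P = z • Mᴴ :=
  calc R * P = Mᴴ * (Pᴴ * P) * M * R * P := by rw [hP, Matrix.mul_one, hM, Matrix.one_mul]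
    _ = Mᴴ * Pᴴ * (P * M * R) * P := by simp only [Matrix.mul_assoc]
    _ = z • Mᴴ := by
      rw [h, Matrix.mul_smul, Matrix.smul_mul, Matrix.mul_one, Matrix.mul_assoc, hP,
        Matrix.mul_one]

theorem MulClosedUpToPhase.of_equivalent {V : ι → Matrix m m ℂ} (hU : IsUEB U)
    (hmul : MulClosedUpToPhase U) (hone : ∃ e, U e = 1) {P R : Matrix m m ℂ}
    (hP : P ∈ unitaryGroup m ℂ) {c : ι → ℂ} (hc : ∀ i, ‖c i‖ = 1) {σ : ι ≃ A}
    (hV : ∀ i, V i = c i • (P * U (σ i) * R)) (hVone : ∃ i, V i = 1) :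
    MulClosedUpToPhase V := by
  obtain ⟨i₀, hi₀⟩ := hVone
  have hc₀ : c i₀ ≠ 0 := norm_ne_zero_iff.mp (by rw [hc]; exact one_ne_zero)
  have hRP : R * P = (c i₀)⁻¹ • (U (σ i₀))ᴴ := by
    refine mul_eq_smul_conjTranspose_of_mul_mul_eq (mem_unitaryGroup_iff'.mp hP)
      (hU.2.1 _).2 ?_
    rw [← hi₀, hV, smul_smul, inv_mul_cancel₀ hc₀, one_smul]
  intro i j
  have hmem : MemUpToPhase U (U (σ i) * (U (σ i₀))ᴴ * U (σ j)) :=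
    ((MemUpToPhase.self U _).mul hmul (hU.memUpToPhase_conjTranspose hmul hone _)).mul hmul
      (MemUpToPhase.self U _)
  have hVV : V i * V j =
      (c i * c j * (c i₀)⁻¹) • (P * (U (σ i) * (U (σ i₀))ᴴ * U (σ j)) * R) :=
    calc V i * V j = (c i * c j) • (P * U (σ i) * (R * P) * U (σ j) * R) := by
          rw [hV, hV, smul_mul_smul_comm]; simp only [Matrix.mul_assoc]
      _ = _ := by
          rw [hRP]
          simp only [Matrix.mul_smul, Matrix.smul_mul, smul_smul, Matrix.mul_assoc]
  rw [hVV]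
  exact (hmem.mul_mul_of_equivalent hc hV).smul (by simp [hc])

theorem nice_closed_under_adjoints_general (n : ℕ)
    {I : Type} [Fintype I] [DecidableEq I]
    (V : I → Matrix (Fin n) (Fin n) ℂ)
    (hV : IsUEB V)
    (hid : ∃ i, V i = 1)
    (hnice : ∃ (A : Type) (_ : Fintype A) (_ : DecidableEq A)
        (U : A → Matrix (Fin n) (Fin n) ℂ),
        IsUEB U ∧ (∃ a, U a = 1) ∧
        (∀ a b, ∃ (ω : ℂ) (c : A), ‖ω‖ = 1 ∧ U a * U b = ω • U c) ∧
        ∃ (P R : Matrix (Fin n) (Fin n) ℂ),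
          P ∈ Matrix.unitaryGroup (Fin n) ℂ ∧ R ∈ Matrix.unitaryGroup (Fin n) ℂ ∧
          ∃ (c : I → ℂ), (∀ i, ‖c i‖ = 1) ∧
          ∃ (σ : I ≃ A), ∀ i, V i = c i • (P * U (σ i) * R)) :
    ∀ i, ∃ (j : I) (c : ℂ), ‖c‖ = 1 ∧ (V i)ᴴ = c • V j := by
  obtain ⟨A, _, _, U, hU, hone, hmul, P, R, hP, -, c, hc, σ, hVU⟩ := hnice
  have hUmul : MulClosedUpToPhase U := fun a b => by
    obtain ⟨ω, d, hω, h⟩ := hmul a b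
    exact ⟨d, ω, hω, h⟩
  exact hV.memUpToPhase_conjTranspose (.of_equivalent hU hUmul hone hP hc hVU hid) hid

/-- a UEB on ℂ^n containing the identity matrix and equivalent to a nice
error basis is, up to phases, closed under taking adjoints. -/
theorem nice_closed_under_adjoints (n : ℕ) (hn : 1 ≤ n)
    {I : Type} [Fintype I] [DecidableEq I]
    (V : I → Matrix (Fin n) (Fin n) ℂ)
    (hV : IsUEB V)
    (hid : ∃ i, V i = 1)
    (hnice : ∃ (A : Type) (_ : Fintype A) (_ : DecidableEq A)
        (U : A → Matrix (Fin n) (Fin n) ℂ),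
        IsUEB U ∧ (∃ a, U a = 1) ∧
        (∀ a b, ∃ (ω : ℂ) (c : A), ‖ω‖ = 1 ∧ U a * U b = ω • U c) ∧
        ∃ (P R : Matrix (Fin n) (Fin n) ℂ),
          P ∈ Matrix.unitaryGroup (Fin n) ℂ ∧ R ∈ Matrix.unitaryGroup (Fin n) ℂ ∧
          ∃ (c : I → ℂ), (∀ i, ‖c i‖ = 1) ∧
          ∃ (σ : I ≃ A), ∀ i, V i = c i • (P * U (σ i) * R)) :
    ∀ i, ∃ (j : I) (c : ℂ), ‖c‖ = 1 ∧ (V i)ᴴ = c • V j :=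
  nice_closed_under_adjoints_general n V hV hid hnice
end
end

section
/- (Dita's construction.) Let n, m ≥ 1, let J be a Hadamard matrix of dimension n, and let (K^c)_{c∈[n]} be an n-controlled family of Hadamard matrices of dimension m. Then the matrix H indexed by [n]×[m] on both rows and columns, with entries H_{(a,b),(c,d)} = J_{a,c} · K^c_{b,d} for a, c ∈ [n] and b, d ∈ [m], is a Hadamard matrix of dimension nm. -/
open scoped ComplexConjugate Matrix

noncomputable section

def ditaProduct {R C S T : Type*} (J : Matrix R C ℂ) (K : C → Matrix S T ℂ) :
    Matrix (R × S) (C × T) ℂ :=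
  Matrix.of fun p q => J p.1 q.1 * K q.1 p.2 q.2

section ditaProduct

variable {R C S T : Type*} [Fintype C] [Fintype T]

/- The inner sum is `m δ_{b,b'}` whatever `c` is, so it leaves the row orthogonality of `J`. -/
theorem ditaProduct_mul_conj_sum (J : Matrix R C ℂ) (K : C → Matrix S T ℂ) (p q : R × S) :
    ∑ k, ditaProduct J K p k * conj (ditaProduct J K q k) =
      ∑ c, J p.1 c * conj (J q.1 c) * ∑ d, K c p.2 d * conj (K c q.2 d) := by
  simp only [ditaProduct, Matrix.of_apply, Fintype.sum_prod_type, Finset.mul_sum, map_mul]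
  exact Finset.sum_congr rfl fun _ _ => Finset.sum_congr rfl fun _ _ => by ring

variable [Fintype R] [Fintype S] [DecidableEq R] [DecidableEq S]

theorem IsHadamard.ditaProduct {J : Matrix R C ℂ} {K : C → Matrix S T ℂ}
    (hJ : IsHadamard J) (hK : ∀ c, IsHadamard (K c)) :
    IsHadamard (ditaProduct J K) := by
  obtain ⟨hJcard, hJnorm, hJorth⟩ := hJ
  refine ⟨?_, fun p q => ?_, fun p q => ?_⟩
  · simp only [Fintype.card_prod, hJcard]
    rcases isEmpty_or_nonempty C with hC | ⟨⟨c⟩⟩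
    · simp
    · rw [(hK c).1]
  · simp [_root_.ditaProduct, hJnorm, (hK q.1).2.1]
  · rw [ditaProduct_mul_conj_sum]
    simp only [(hK _).2.2]
    rw [← Finset.sum_mul, hJorth, Fintype.card_prod, Nat.cast_mul]
    by_cases h₁ : p.1 = q.1 <;> by_cases h₂ : p.2 = q.2 <;> simp [h₁, h₂, Prod.ext_iff]

end ditaProduct

theorem dita_construction_general (n m : ℕ)
    (J : Matrix (Fin n) (Fin n) ℂ)
    (K : Fin n → Matrix (Fin m) (Fin m) ℂ)
    (hJ : IsHadamard J) (hK : ∀ c, IsHadamard (K c)) :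
    IsHadamard (Matrix.of fun (p q : Fin n × Fin m) =>
      J p.1 q.1 * K q.1 p.2 q.2) :=
  hJ.ditaProduct hK

/-- Dita's construction: an n-dimensional Hadamard matrix J and an
n-controlled family of m-dimensional Hadamard matrices combine, via
`H_{(a,b),(c,d)} = J_{a,c} · K^c_{b,d}`, into an nm-dimensional Hadamard matrix. -/
theorem dita_construction (n m : ℕ) (hn : 1 ≤ n) (hm : 1 ≤ m)
    (J : Matrix (Fin n) (Fin n) ℂ)
    (K : Fin n → Matrix (Fin m) (Fin m) ℂ)
    (hJ : IsHadamard J) (hK : ∀ c, IsHadamard (K c)) :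
    IsHadamard (Matrix.of fun (p q : Fin n × Fin m) =>
      J p.1 q.1 * K q.1 p.2 q.2) :=
  dita_construction_general n m J K hJ hK
end
end
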